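/- arXiv:2311.09844 — 4 statements merged into one kernel-verified Lean document; each statement's English description precedes it below -/
import Mathlib

section
/- The set Λ = {k^3 : k ∈ ℤ} ⊂ ℝ is sparse: for every ε > 0 there exists a finite cover Λ = Λ₁ ∪ … ∪ Λ_m such that ∑_{j=1}^m 1/γ(Λ_j) < ε, where γ(S) := inf{|a - b| : a, b ∈ S, a ≠ b} (with γ(S) = +∞ if S has at most one element). -/
open scoped ENNReal

variable {E : Type*} [NormedAddCommGroup E]

/-- The separation constant of a set: infimum of distances between distinct points
(`∞` if the set has at most one element). -/
noncomputable def gap (S : Set E) : ℝ≥0∞ :=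
  ⨅ (a : E) (_ : a ∈ S) (b : E) (_ : b ∈ S) (_ : a ≠ b), (‖a - b‖₊ : ℝ≥0∞)

/-- A set is sparse if for every `ε > 0` it admits a finite cover whose
reciprocal separation constants sum to less than `ε` (with `1/∞ = 0`). -/
def Sparse (S : Set E) : Prop :=
  ∀ ε : ℝ, 0 < ε → ∃ (m : ℕ) (Λ : Fin m → Set E),
    S = (⋃ j, Λ j) ∧ ∑ j, (gap (Λ j))⁻¹ < ENNReal.ofReal ε

/-!
Cover `ℤ` by its `M` residue classes modulo `M`. Two distinct cubes `k³ ≠ l³` with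
`k ≡ l [ZMOD M]` satisfy `|k³ - l³| ≥ |k - l|³ / 4 ≥ M³ / 4`, so the image of each class has
separation constant at least `M³ / 4`, and the `M` classes contribute at most `4 / M²` to the
sum, which tends to `0`.
-/

open Filter Topology

theorem abs_sub_pow_three_le {α : Type*} [CommRing α] [LinearOrder α] [IsStrictOrderedRing α]
    (a b : α) : |a - b| ^ 3 ≤ 4 * |a ^ 3 - b ^ 3| := by
  have hq : 0 ≤ a ^ 2 + a * b + b ^ 2 := by nlinarith [sq_nonneg (a + b), sq_nonneg a, sq_nonneg b]
  -- `4 (a² + ab + b²) - (a - b)² = 3 (a + b)²`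
  have hsq : (a - b) ^ 2 ≤ 4 * (a ^ 2 + a * b + b ^ 2) := by nlinarith [sq_nonneg (a + b)]
  calc |a - b| ^ 3 = |a - b| * (a - b) ^ 2 := by rw [pow_succ', sq_abs]
    _ ≤ |a - b| * (4 * (a ^ 2 + a * b + b ^ 2)) := by gcongr
    _ = 4 * |a ^ 3 - b ^ 3| := by
      rw [show a ^ 3 - b ^ 3 = (a - b) * (a ^ 2 + a * b + b ^ 2) by ring, abs_mul,
        abs_of_nonneg hq]
      ring

theorem ofReal_le_gap {S : Set E} {δ : ℝ} (h : ∀ a ∈ S, ∀ b ∈ S, a ≠ b → δ ≤ ‖a - b‖) :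
    ENNReal.ofReal δ ≤ gap S :=
  le_iInf₂ fun a ha => le_iInf₂ fun b hb => le_iInf fun hab =>
    ENNReal.ofReal_le_of_le_toReal (by simpa using h a ha b hb hab)

theorem sparse_of_tendsto {S : Set E} {ι : ℕ → Type*} [∀ n, Fintype (ι n)]
    (Λ : ∀ n, ι n → Set E) (u : ℕ → ℝ) (hu : Tendsto u atTop (𝓝 0))
    (hcover : ∀ n, S = ⋃ i, Λ n i) (hsum : ∀ n, ∑ i, (gap (Λ n i))⁻¹ ≤ ENNReal.ofReal (u n)) :
    Sparse S := by
  intro ε hε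
  obtain ⟨n, hn⟩ := (hu.eventually (gt_mem_nhds hε)).exists
  let e := (Fintype.equivFin (ι n)).symm
  refine ⟨Fintype.card (ι n), Λ n ∘ e, ?_, ?_⟩
  · rw [hcover n]
    exact (e.surjective.iUnion_comp (Λ n)).symm
  · calc ∑ j, (gap (Λ n (e j)))⁻¹ = ∑ i, (gap (Λ n i))⁻¹ :=
        e.sum_comp fun i => (gap (Λ n i))⁻¹
      _ ≤ ENNReal.ofReal (u n) := hsum n
      _ < ENNReal.ofReal ε := (ENNReal.ofReal_lt_ofReal_iff hε).2 hn

section PowGrowth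

variable {f : ℤ → E} {c : ℝ} {p : ℕ}

theorem ofReal_le_gap_image_residueClass (hc : 0 ≤ c)
    (hf : ∀ k l : ℤ, c * |(k : ℝ) - l| ^ p ≤ ‖f k - f l‖) (M : ℕ) (r : ZMod M) :
    ENNReal.ofReal (c * M ^ p) ≤ gap (f '' {k | (k : ZMod M) = r}) := by
  refine ofReal_le_gap ?_
  rintro _ ⟨k, hk, rfl⟩ _ ⟨l, hl, rfl⟩ hne
  have hkl : k - l ≠ 0 := sub_ne_zero.2 (ne_of_apply_ne f hne)
  have hdvd : (M : ℤ) ∣ k - l := (ZMod.intCast_eq_intCast_iff_dvd_sub l k M).1 (hl.trans hk.symm)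
  have hM : (M : ℝ) ≤ |(k : ℝ) - l| := by
    exact_mod_cast Int.le_of_dvd (abs_pos.2 hkl) ((dvd_abs _ _).2 hdvd)
  calc c * (M : ℝ) ^ p ≤ c * |(k : ℝ) - l| ^ p := by gcongr
    _ ≤ ‖f k - f l‖ := hf k l

theorem sum_inv_gap_image_residueClass_le (hc : 0 < c) (hp : 2 ≤ p)
    (hf : ∀ k l : ℤ, c * |(k : ℝ) - l| ^ p ≤ ‖f k - f l‖) (M : ℕ) [NeZero M] :
    ∑ r : ZMod M, (gap (f '' {k | (k : ZMod M) = r}))⁻¹ ≤ ENNReal.ofReal (c⁻¹ / M) := by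
  have hM : (1 : ℝ) ≤ M := Nat.one_le_cast.2 (Nat.pos_of_neZero M)
  have hcM : 0 < c * (M : ℝ) ^ p := by positivity
  calc ∑ r : ZMod M, (gap (f '' {k | (k : ZMod M) = r}))⁻¹
      ≤ ∑ _r : ZMod M, (ENNReal.ofReal (c * M ^ p))⁻¹ := Finset.sum_le_sum fun r _ =>
        ENNReal.inv_le_inv.2 (ofReal_le_gap_image_residueClass hc.le hf M r)
    _ = ENNReal.ofReal (M * (c * M ^ p)⁻¹) := by
      rw [Finset.sum_const, Finset.card_univ, ZMod.card, nsmul_eq_mul,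
        ← ENNReal.ofReal_inv_of_pos hcM, ENNReal.ofReal_mul (Nat.cast_nonneg M),
        ENNReal.ofReal_natCast]
    _ ≤ ENNReal.ofReal (c⁻¹ / M) := by
      refine ENNReal.ofReal_le_ofReal ?_
      field_simp
      exact pow_le_pow_right₀ hM hp

theorem sparse_range_of_pow_growth (hc : 0 < c) (hp : 2 ≤ p)
    (hf : ∀ k l : ℤ, c * |(k : ℝ) - l| ^ p ≤ ‖f k - f l‖) : Sparse (Set.range f) :=
  sparse_of_tendsto (fun n (r : ZMod (n + 1)) => f '' {k | (k : ZMod (n + 1)) = r})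
    (fun n => c⁻¹ / (n + 1 : ℕ))
    ((tendsto_const_div_atTop_nhds_zero_nat c⁻¹).comp (tendsto_add_atTop_nat 1))
    (fun n => by ext x; simp)
    (fun n => sum_inv_gap_image_residueClass_le hc hp hf (n + 1))

end PowGrowth

theorem cubes_sparse : Sparse {x : ℝ | ∃ k : ℤ, x = (k : ℝ)^3} := by
  have hrange : {x : ℝ | ∃ k : ℤ, x = (k : ℝ) ^ 3} = Set.range fun k : ℤ => (k : ℝ) ^ 3 := by
    ext x
    simp [eq_comm]
  rw [hrange]
  refine sparse_range_of_pow_growth (c := 1 / 4) (p := 3) (by norm_num) (by norm_num) fun k l => ?_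
  rw [Real.norm_eq_abs]
  linarith [abs_sub_pow_three_le (k : ℝ) l]
end

section
/- Let Λ be a subset of a normed space. If for every R > 0 there exists a sparse set Λ' ⊆ Λ such that γ(Λ \setminus Λ') ≥ R, then Λ is sparse. -/
open scoped ENNReal

variable {E : Type*} [NormedAddCommGroup E]

theorem sparse_of_gap_off_sparse (Λ : Set E)
    (h : ∀ R : ℝ, 0 < R → ∃ Λ' : Set E, Λ' ⊆ Λ ∧ Sparse Λ' ∧
      ENNReal.ofReal R ≤ gap (Λ \ Λ')) : Sparse Λ := by
  intro ε hε
  have hR : (0:ℝ) < 2 / ε := by positivity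
  obtain ⟨Λ', hsub, hsp, hgap⟩ := h (2 / ε) hR
  obtain ⟨m, F, hcov, hsum⟩ := hsp (ε / 2) (by positivity)
  refine ⟨m + 1, Fin.cons (Λ \ Λ') F, ?_, ?_⟩
  · ext x
    simp only [Fin.forall_fin_succ, Set.mem_iUnion]
    constructor
    · intro hx
      by_cases hx' : x ∈ Λ'
      · have : x ∈ ⋃ j, F j := hcov ▸ hx'
        obtain ⟨j, hj⟩ := Set.mem_iUnion.mp this
        exact ⟨j.succ, by simpa using hj⟩
      · exact ⟨0, by simp [hx, hx']⟩
    · rintro ⟨j, hj⟩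
      refine Fin.cases ?_ ?_ j hj
      · intro hj; exact hj.1
      · intro i hj
        simp only [Fin.cons_succ] at hj
        exact hsub (hcov ▸ Set.mem_iUnion.mpr ⟨i, hj⟩)
  · rw [Fin.sum_univ_succ]
    simp only [Fin.cons_zero, Fin.cons_succ]
    have h1 : (gap (Λ \ Λ'))⁻¹ ≤ ENNReal.ofReal (ε / 2) := by
      have h2 : (ENNReal.ofReal (2 / ε))⁻¹ = ENNReal.ofReal (ε / 2) := by
        rw [← ENNReal.ofReal_inv_of_pos hR, inv_div]
      exact h2 ▸ ENNReal.inv_le_inv.mpr hgap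
    calc (gap (Λ \ Λ'))⁻¹ + ∑ i, (gap (F i))⁻¹
        < ENNReal.ofReal (ε / 2) + ENNReal.ofReal (ε / 2) :=
          ENNReal.add_lt_add_of_le_of_lt (h1.trans_lt ENNReal.ofReal_lt_top).ne h1 hsum
      _ = ENNReal.ofReal ε := by
          rw [← ENNReal.ofReal_add (by positivity) (by positivity)]; ring_nf
end

section
/- Let g : ℤ → ℤ^{N-1} be arbitrary and f : ℤ → ℤ satisfy f(m+1) - f(m) → +∞ as |m| → ∞. Then the set Λ = {(g(m), f(m)) : m ∈ ℤ} ⊂ ℝ^N is sparse. -/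
open scoped ENNReal

variable {E : Type*} [NormedAddCommGroup E]

/-!
Choose `n` large and `M₁`, `M₂` such that `f (m + 1) - f m ≥ n` for `m ≤ M₁` and for `m ≥ M₂`.
On each of the half-lines `m ≤ M₁` and `m ≥ M₂` the last coordinate `f m` then grows by at least
`n` from one point to the next, so the corresponding part of `Λ` has separation at least `n`;
the finitely many remaining points are covered by singletons, whose separation is `∞`.
-/

open Filter Set

lemma le_gap_iff {S : Set E} {r : ℝ≥0∞} :
    r ≤ gap S ↔ ∀ a ∈ S, ∀ b ∈ S, a ≠ b → r ≤ ‖a - b‖₊ := by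
  simp only [gap, le_iInf_iff]

lemma gap_singleton (x : E) : gap ({x} : Set E) = ⊤ :=
  top_le_iff.1 <| le_gap_iff.2 fun _ ha _ hb hab => absurd (ha.trans hb.symm) hab

lemma le_gap_image {α : Type*} [LinearOrder α] {p : α → E} {T : Set α} {r : ℝ≥0∞}
    (h : ∀ a ∈ T, ∀ b ∈ T, a < b → r ≤ ‖p b - p a‖₊) : r ≤ gap (p '' T) := by
  rw [le_gap_iff]
  rintro _ ⟨a, ha, rfl⟩ _ ⟨b, hb, rfl⟩ hab
  rcases lt_or_gt_of_ne (ne_of_apply_ne p hab) with hlt | hlt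
  · rw [← nnnorm_neg, neg_sub]
    exact h a ha b hb hlt
  · exact h b hb a ha hlt

lemma exists_fin_reindex {ι : Type*} [Fintype ι] (Λ : ι → Set E) :
    ∃ (m : ℕ) (Λ' : Fin m → Set E), ⋃ j, Λ' j = ⋃ i, Λ i ∧
      ∑ j, (gap (Λ' j))⁻¹ = ∑ i, (gap (Λ i))⁻¹ :=
  ⟨_, Λ ∘ (Fintype.equivFin ι).symm, (Fintype.equivFin ι).symm.surjective.iUnion_comp Λ,
    (Fintype.equivFin ι).symm.sum_comp fun i => (gap (Λ i))⁻¹⟩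

lemma sparse_of_forall_finite_union {ι : Type*} [Fintype ι] {S : Set E}
    (h : ∀ n : ℕ, ∃ F : Set E, F.Finite ∧ ∃ T : ι → Set E,
      S = F ∪ ⋃ i, T i ∧ ∀ i, (n : ℝ≥0∞) ≤ gap (T i)) : Sparse S := by
  intro ε hε
  obtain ⟨n, hn⟩ := ENNReal.exists_inv_nat_lt
    (ENNReal.div_pos (ENNReal.ofReal_pos.2 hε).ne' (ENNReal.natCast_ne_top (Fintype.card ι))).ne'
  obtain ⟨F, hF, T, rfl, hT⟩ := h n
  have := hF.fintype
  obtain ⟨m, Λ, hΛ, hsum⟩ := exists_fin_reindex (Sum.elim (fun x : F => ({x.1} : Set E)) T)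
  refine ⟨m, Λ, by rw [hΛ, iUnion_sumElim, iUnion_of_singleton_coe], ?_⟩
  rw [hsum, Fintype.sum_sum_type]
  simp only [Sum.elim_inl, Sum.elim_inr, gap_singleton, ENNReal.inv_top, Finset.sum_const_zero,
    zero_add]
  calc ∑ i, (gap (T i))⁻¹ ≤ ∑ _ : ι, (n : ℝ≥0∞)⁻¹ :=
        Finset.sum_le_sum fun i _ => ENNReal.inv_le_inv' (hT i)
    _ = (n : ℝ≥0∞)⁻¹ * Fintype.card ι := by simp [mul_comm]
    _ < ENNReal.ofReal ε := ENNReal.mul_lt_of_lt_div hn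

lemma le_sub_of_forall_le_succ_sub {f : ℤ → ℤ} {T : Set ℤ} [T.OrdConnected] {n : ℕ}
    (hT : ∀ j ∈ T, (n : ℤ) ≤ f (j + 1) - f j) {a b : ℤ} (ha : a ∈ T) (hb : b ∈ T)
    (hab : a < b) : n ≤ f b - f a := by
  induction b, (hab : a + 1 ≤ b) using Int.leInduction with
  | base => exact hT a ha
  | succ b hab ih =>
    have hbT : b ∈ T := Set.OrdConnected.out ‹_› ha hb ⟨by omega, by omega⟩
    have := hT b hbT
    have := ih hbT
    omega

noncomputable def graphPoint {k : ℕ} (g : ℤ → Fin k → ℤ) (f : ℤ → ℤ) (m : ℤ) :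
    EuclideanSpace ℝ (Fin (k + 1)) :=
  WithLp.toLp 2 (Fin.snoc (fun i => (g m i : ℝ)) (f m : ℝ))

lemma natCast_le_gap_graphPoint_image {k : ℕ} (g : ℤ → Fin k → ℤ) (f : ℤ → ℤ) {T : Set ℤ}
    [T.OrdConnected] {n : ℕ} (hT : ∀ j ∈ T, (n : ℤ) ≤ f (j + 1) - f j) :
    (n : ℝ≥0∞) ≤ gap (graphPoint g f '' T) := by
  refine le_gap_image fun a ha b hb hab => ?_
  have hfab : (n : ℝ) ≤ f b - f a := by
    exact_mod_cast le_sub_of_forall_le_succ_sub hT ha hb hab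
  rw [← ENNReal.coe_natCast, ENNReal.coe_le_coe, ← NNReal.coe_le_coe, coe_nnnorm]
  calc (n : ℝ) ≤ ‖(graphPoint g f b - graphPoint g f a) (Fin.last k)‖ := by
        simpa [graphPoint, Real.norm_eq_abs] using hfab.trans (le_abs_self _)
    _ ≤ ‖graphPoint g f b - graphPoint g f a‖ := PiLp.norm_apply_le _ _

theorem sparse_graph_of_gap_growth (k : ℕ) (g : ℤ → Fin k → ℤ) (f : ℤ → ℤ)
    (hf : Filter.Tendsto (fun m : ℤ => f (m + 1) - f m) Filter.cofinite Filter.atTop) :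
    Sparse {p : EuclideanSpace ℝ (Fin (k + 1)) |
      ∃ m : ℤ, p = WithLp.toLp 2 (Fin.snoc (fun i => (g m i : ℝ)) ((f m : ℝ)))} := by
  suffices Sparse (range (graphPoint g f)) by
    convert this using 1
    ext
    simp [graphPoint, eq_comm]
  rw [Int.cofinite_eq, tendsto_sup] at hf
  -- The two tails need separate pieces: `f` may take the same values on both of them.
  refine sparse_of_forall_finite_union (ι := Bool) fun n => ?_
  obtain ⟨M₁, hM₁⟩ := eventually_atBot.1 (hf.1.eventually_ge_atTop n)
  obtain ⟨M₂, hM₂⟩ := eventually_atTop.1 (hf.2.eventually_ge_atTop n)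
  refine ⟨graphPoint g f '' Ioo M₁ M₂, (finite_Ioo M₁ M₂).image _,
    fun b => graphPoint g f '' bif b then Ici M₂ else Iic M₁, ?_, ?_⟩
  · rw [← image_iUnion, ← image_union, ← image_univ]
    congr 1
    ext m
    simp only [mem_univ, mem_union, mem_Ioo, mem_iUnion, Bool.exists_bool, cond_false, cond_true,
      mem_Iic, mem_Ici, true_iff]
    omega
  · rintro (_ | _)
    · exact natCast_le_gap_graphPoint_image (T := Iic M₁) g f hM₁
    · exact natCast_le_gap_graphPoint_image (T := Ici M₂) g f hM₂
end

section
/- Let k, ℓ be integers with 3k² > ℓ², and let R > 0. Then the set B = {(m,n) ∈ ℤ² : m ≠ 0 and |Q(k,ℓ,m,n)| < R} is finite. -/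
theorem B_finite_of_definite (k ℓ : ℤ) (h : ℓ^2 < 3*k^2) (R : ℝ) (hR : 0 < R) :
    {p : ℤ × ℤ | p.1 ≠ 0 ∧
      |(k*(3*p.1^2 + p.2^2) + 2*ℓ*p.1*p.2 + (3*k^2 + ℓ^2)*p.1
        + k*(2*ℓ*p.2 + k^2 + ℓ^2 - 1) : ℝ)| < R}.Finite := by
  have hkne : k ≠ 0 := by
    rintro rfl
    nlinarith [sq_nonneg ℓ]
  have hk1 : (1 : ℤ) ≤ |k| := Int.one_le_abs hkne
  set R' : ℤ := ⌈R⌉ with hR'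
  set T : ℤ := 4*|k| *R' + k^4 + k^2*ℓ^2 + 4*k^2 with hT
  set M : ℤ := T + |k| with hM
  set N : ℤ := T + |ℓ| *(M+|k|) with hN
  apply Set.Finite.subset ((Set.finite_Icc (-M) M).prod (Set.finite_Icc (-N) N))
  rintro ⟨m, n⟩ ⟨hm0, hQ⟩
  set Q : ℤ := k*(3*m^2 + n^2) + 2*ℓ*m*n + (3*k^2 + ℓ^2)*m + k*(2*ℓ*n + k^2 + ℓ^2 - 1)
    with hQdef
  have hcast : ((Q : ℝ)) = (k*(3*(m:ℝ)^2 + n^2) + 2*ℓ*m*n + (3*k^2 + ℓ^2)*m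
      + k*(2*ℓ*n + k^2 + ℓ^2 - 1) : ℝ) := by
    push_cast [hQdef]; ring
  rw [show ((⟨m,n⟩ : ℤ × ℤ).1) = m from rfl, show ((⟨m,n⟩ : ℤ × ℤ).2) = n from rfl,
    ← hcast] at hQ
  have hQR' : |Q| < R' := by
    have h1 : |(Q:ℝ)| < (R':ℝ) := lt_of_lt_of_le hQ (Int.le_ceil R)
    exact_mod_cast h1
  have hQle : |Q| ≤ R' := le_of_lt hQR'
  have key : 4*k*Q = 4*(k*n+ℓ*(m+k))^2 + (3*k^2-ℓ^2)*(2*m+k)^2 + k^2*(k^2+ℓ^2-4) := by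
    rw [hQdef]; ring
  have habs4 : |4*k*Q| ≤ 4*|k| *R' := by
    rw [abs_mul, abs_mul]
    simp only [abs_of_nonneg (by norm_num : (0:ℤ) ≤ 4)]
    have : |k| * |Q| ≤ |k| * R' := mul_le_mul_of_nonneg_left hQle (abs_nonneg k)
    nlinarith
  have h4kQ : 4*k*Q ≤ 4*|k| *R' := le_trans (le_abs_self _) habs4
  have hd1 : (1:ℤ) ≤ 3*k^2 - ℓ^2 := by linarith
  have hb2 : (2*m+k)^2 ≤ T := by
    nlinarith [sq_nonneg (k*n+ℓ*(m+k)), sq_nonneg (2*m+k), sq_nonneg k, sq_nonneg (k*ℓ),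
      mul_nonneg (by linarith : (0:ℤ) ≤ 3*k^2 - ℓ^2 - 1) (sq_nonneg (2*m+k))]
  have ha2 : (k*n+ℓ*(m+k))^2 ≤ T := by
    nlinarith [sq_nonneg (k*n+ℓ*(m+k)), sq_nonneg (2*m+k), sq_nonneg k, sq_nonneg (k*ℓ),
      mul_nonneg (by linarith : (0:ℤ) ≤ 3*k^2 - ℓ^2 - 1) (sq_nonneg (2*m+k))]
  have habs_le_sq : ∀ x : ℤ, |x| ≤ x^2 := by
    intro x
    have := Int.le_self_sq |x|
    rwa [sq_abs] at this
  have hb : |2*m+k| ≤ T := le_trans (habs_le_sq _) hb2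
  have ha : |k*n+ℓ*(m+k)| ≤ T := le_trans (habs_le_sq _) ha2
  have hmM : |m| ≤ M := by
    have h1 : |2*m| ≤ |2*m+k| + |k| := by
      calc |2*m| = |(2*m+k) - k| := by ring_nf
        _ ≤ |2*m+k| + |k| := abs_sub _ _
    have h2 : |2*m| = 2*|m| := by rw [abs_mul]; norm_num
    have hTnn : 0 ≤ T := le_trans (abs_nonneg _) hb
    rw [h2] at h1
    have : 2*|m| ≤ T + |k| := by linarith
    have hknn := abs_nonneg k
    omega
  have hnN : |n| ≤ N := by
    have hkn : |k*n| ≤ T + |ℓ| *(|m|+|k|) := by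
      have h1 : |k*n| ≤ |k*n+ℓ*(m+k)| + |ℓ*(m+k)| := by
        have := abs_sub (k*n+ℓ*(m+k)) (ℓ*(m+k))
        calc |k*n| = |(k*n+ℓ*(m+k)) - ℓ*(m+k)| := by ring_nf
          _ ≤ |k*n+ℓ*(m+k)| + |ℓ*(m+k)| := abs_sub _ _
      have h2 : |ℓ*(m+k)| ≤ |ℓ| *(|m|+|k|) := by
        rw [abs_mul]
        exact mul_le_mul_of_nonneg_left (abs_add_le m k) (abs_nonneg ℓ)
      linarith
    have hmono : |ℓ| *(|m|+|k|) ≤ |ℓ| *(M+|k|) := by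
      apply mul_le_mul_of_nonneg_left _ (abs_nonneg ℓ)
      linarith
    have hkn2 : |k*n| ≤ N := by rw [hN]; linarith
    have : |n| ≤ |k*n| := by
      rw [abs_mul]
      exact le_mul_of_one_le_left (abs_nonneg n) hk1
    linarith
  simp only [Set.mem_prod, Set.mem_Icc]
  exact ⟨abs_le.mp hmM, abs_le.mp hnN⟩
end
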